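/- Let H be a separable Hilbert space and (ψᵢ)_{i∈ℕ} a family of vectors in H. Suppose there is a subset S of H whose linear span is dense such that: (a) for every f ∈ S, the sequence (⟨f,ψᵢ⟩)ᵢ lies in ℓ²(ℕ); and (b) for all f, g ∈ S, ∑ᵢ ⟨f,ψᵢ⟩⟨ψᵢ,g⟩ = ⟨f,g⟩. Then (ψᵢ)ᵢ is a Parseval frame for H, i.e. ∑ᵢ |⟨f,ψᵢ⟩|² = ‖f‖² for every f ∈ H. -/

import Mathlib

open MeasureTheory Set

local notation "⟪" x ", " y "⟫" => @inner ℂ _ _ x y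

/-!
On the span of `S` the polarised identity `(b)` gives Parseval's identity. By density, every
finite partial sum then obeys Bessel's inequality on all of `H`, so the analysis operator
`f ↦ (⟪ψ i, f⟫)ᵢ` is a contraction into `ℓ²`; being continuous and isometric on a dense set,
it is isometric everywhere, which is Parseval's identity.
-/

open scoped InnerProductSpace

theorem lp.hasSum_norm_sq {ι : Type*} {E : ι → Type*} [∀ i, NormedAddCommGroup (E i)]
    (f : lp E 2) : HasSum (fun i => ‖f i‖ ^ 2) (‖f‖ ^ 2) := by
  simpa only [ENNReal.toReal_ofNat, Real.rpow_two] using lp.hasSum_norm (by norm_num) f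

section Frame

variable {𝕜 E ι : Type*} [RCLike 𝕜] [NormedAddCommGroup E] [InnerProductSpace 𝕜 E]
  {ψ : ι → E}

theorem HasSum.inner_mul_inner_swap {f g : E}
    (h : HasSum (fun i => ⟪f, ψ i⟫_𝕜 * ⟪ψ i, g⟫_𝕜) ⟪f, g⟫_𝕜) :
    HasSum (fun i => ⟪g, ψ i⟫_𝕜 * ⟪ψ i, f⟫_𝕜) ⟪g, f⟫_𝕜 := by
  simpa only [star_mul', RCLike.star_def, inner_conj_symm, mul_comm] using h.star

theorem hasSum_inner_mul_inner_of_mem_span_right {S : Set E} {f : E}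
    (h : ∀ g ∈ S, HasSum (fun i => ⟪f, ψ i⟫_𝕜 * ⟪ψ i, g⟫_𝕜) ⟪f, g⟫_𝕜)
    {g : E} (hg : g ∈ Submodule.span 𝕜 S) :
    HasSum (fun i => ⟪f, ψ i⟫_𝕜 * ⟪ψ i, g⟫_𝕜) ⟪f, g⟫_𝕜 := by
  induction hg using Submodule.span_induction with
  | mem g hg => exact h g hg
  | zero => simpa only [inner_zero_right, mul_zero] using hasSum_zero
  | add g g' _ _ hg hg' => simpa only [inner_add_right, mul_add] using hg.add hg'
  | smul c g _ hg => simpa only [inner_smul_right, mul_left_comm] using hg.mul_left c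

theorem hasSum_inner_mul_inner_of_mem_span {S : Set E}
    (h : ∀ f ∈ S, ∀ g ∈ S, HasSum (fun i => ⟪f, ψ i⟫_𝕜 * ⟪ψ i, g⟫_𝕜) ⟪f, g⟫_𝕜)
    {f g : E} (hf : f ∈ Submodule.span 𝕜 S) (hg : g ∈ Submodule.span 𝕜 S) :
    HasSum (fun i => ⟪f, ψ i⟫_𝕜 * ⟪ψ i, g⟫_𝕜) ⟪f, g⟫_𝕜 :=
  (hasSum_inner_mul_inner_of_mem_span_right (fun f' hf' =>
    (hasSum_inner_mul_inner_of_mem_span_right (h f' hf') hg).inner_mul_inner_swap)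
    hf).inner_mul_inner_swap

theorem hasSum_inner_mul_inner_self_iff {f : E} :
    HasSum (fun i => ⟪f, ψ i⟫_𝕜 * ⟪ψ i, f⟫_𝕜) ⟪f, f⟫_𝕜 ↔
      HasSum (fun i => ‖⟪f, ψ i⟫_𝕜‖ ^ 2) (‖f‖ ^ 2) := by
  have hterm : ∀ i, ⟪f, ψ i⟫_𝕜 * ⟪ψ i, f⟫_𝕜 = ((‖⟪f, ψ i⟫_𝕜‖ ^ 2 : ℝ) : 𝕜) := fun i => by
    rw [← inner_conj_symm (ψ i) f, RCLike.mul_conj, RCLike.ofReal_pow]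
  rw [funext hterm, inner_self_eq_norm_sq_to_K, ← RCLike.ofReal_pow, RCLike.hasSum_ofReal]

theorem sum_norm_inner_sq_le_of_dense {D : Set E} (hD : Dense D)
    (h : ∀ f ∈ D, HasSum (fun i => ‖⟪f, ψ i⟫_𝕜‖ ^ 2) (‖f‖ ^ 2)) (f : E) (s : Finset ι) :
    ∑ i ∈ s, ‖⟪f, ψ i⟫_𝕜‖ ^ 2 ≤ ‖f‖ ^ 2 :=
  hD.induction (fun f hf => sum_le_hasSum s (fun i _ => by positivity) (h f hf))
    (isClosed_le (by fun_prop) (by fun_prop)) f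

variable (ψ) in
noncomputable def analysisOperator
    (hψ : ∀ (f : E) (s : Finset ι), ∑ i ∈ s, ‖⟪f, ψ i⟫_𝕜‖ ^ 2 ≤ ‖f‖ ^ 2) :
    E →L[𝕜] lp (fun _ : ι => 𝕜) 2 :=
  LinearMap.mkContinuous
    { toFun f := ⟨fun i => ⟪ψ i, f⟫_𝕜, memℓp_gen' (C := ‖f‖ ^ 2) fun s => by
        simpa only [ENNReal.toReal_ofNat, Real.rpow_two, norm_inner_symm] using hψ f s⟩
      map_add' f g := by ext i; simp only [inner_add_right, lp.coeFn_add, Pi.add_apply]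
      map_smul' c f := by ext i; simp only [inner_smul_right, lp.coeFn_smul, Pi.smul_apply,
        smul_eq_mul, RingHom.id_apply] }
    1 fun f => by
      rw [one_mul]
      refine lp.norm_le_of_forall_sum_le (by norm_num) (norm_nonneg f) fun s => ?_
      simpa only [LinearMap.coe_mk, AddHom.coe_mk, ENNReal.toReal_ofNat, Real.rpow_two,
        norm_inner_symm] using hψ f s

theorem analysisOperator_apply
    (hψ : ∀ (f : E) (s : Finset ι), ∑ i ∈ s, ‖⟪f, ψ i⟫_𝕜‖ ^ 2 ≤ ‖f‖ ^ 2) (f : E) (i : ι) :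
    analysisOperator ψ hψ f i = ⟪ψ i, f⟫_𝕜 :=
  rfl

theorem hasSum_norm_inner_sq_analysisOperator
    (hψ : ∀ (f : E) (s : Finset ι), ∑ i ∈ s, ‖⟪f, ψ i⟫_𝕜‖ ^ 2 ≤ ‖f‖ ^ 2) (f : E) :
    HasSum (fun i => ‖⟪f, ψ i⟫_𝕜‖ ^ 2) (‖analysisOperator ψ hψ f‖ ^ 2) := by
  simpa only [analysisOperator_apply, norm_inner_symm] using lp.hasSum_norm_sq (analysisOperator ψ hψ f)

theorem hasSum_norm_inner_sq_of_dense {D : Set E} (hD : Dense D)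
    (h : ∀ f ∈ D, HasSum (fun i => ‖⟪f, ψ i⟫_𝕜‖ ^ 2) (‖f‖ ^ 2)) (f : E) :
    HasSum (fun i => ‖⟪f, ψ i⟫_𝕜‖ ^ 2) (‖f‖ ^ 2) := by
  let A := analysisOperator ψ (sum_norm_inner_sq_le_of_dense hD h)
  have hA : ∀ f, ‖A f‖ ^ 2 = ‖f‖ ^ 2 :=
    hD.induction (fun f hf => (hasSum_norm_inner_sq_analysisOperator _ f).unique (h f hf))
      (isClosed_eq (by fun_prop) (by fun_prop))
  exact hA f ▸ hasSum_norm_inner_sq_analysisOperator _ f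

end Frame

theorem stmt_6_general {H : Type*} [NormedAddCommGroup H] [InnerProductSpace ℂ H]
    (ψ : ℕ → H) (S : Set H)
    (htotal : Dense ((Submodule.span ℂ S : Submodule ℂ H) : Set H))
    (hb : ∀ f ∈ S, ∀ g ∈ S, HasSum (fun i => ⟪f, ψ i⟫ * ⟪ψ i, g⟫) ⟪f, g⟫) :
    ∀ f : H, HasSum (fun i => ‖⟪f, ψ i⟫‖ ^ 2) (‖f‖ ^ 2) :=
  hasSum_norm_inner_sq_of_dense htotal fun _ hf =>
    hasSum_inner_mul_inner_self_iff.mp (hasSum_inner_mul_inner_of_mem_span hb hf hf)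

/-- If there is a total subset `S` of a separable Hilbert space `H` such that
`(⟨f,ψᵢ⟩)ᵢ ∈ ℓ²` for `f ∈ S` and `∑ᵢ ⟨f,ψᵢ⟩⟨ψᵢ,g⟩ = ⟨f,g⟩` for `f,g ∈ S`, then
`(ψᵢ)` is a Parseval frame for `H`. -/
theorem stmt_6 {H : Type*} [NormedAddCommGroup H] [InnerProductSpace ℂ H]
    [CompleteSpace H] [TopologicalSpace.SeparableSpace H]
    (ψ : ℕ → H) (S : Set H)
    (htotal : Dense ((Submodule.span ℂ S : Submodule ℂ H) : Set H))
    (ha : ∀ f ∈ S, Summable fun i => ‖⟪f, ψ i⟫‖ ^ 2)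
    (hb : ∀ f ∈ S, ∀ g ∈ S, HasSum (fun i => ⟪f, ψ i⟫ * ⟪ψ i, g⟫) ⟪f, g⟫) :
    ∀ f : H, HasSum (fun i => ‖⟪f, ψ i⟫‖ ^ 2) (‖f‖ ^ 2) :=
  stmt_6_general ψ S htotal hb
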